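/- Let k ∈ ℂ, q, ψᵣ, ψᵢ as in the previous setting (∂̄ψᵣ + q·e(z,−k)·conj(ψᵣ) = 0, ∂̄ψᵢ − q·e(z,−k)·conj(ψᵢ) = 0), and define m₂ = ½·e(z,−k)·(conj(ψᵢ) − conj(ψᵣ)). Then (∂ + ik)m₂ = conj(q)·m₁ pointwise, where m₁ = ½(ψᵣ + ψᵢ) and ∂ = ½(∂ₓ − i∂_y). -/

import Mathlib

open Complex MeasureTheory Filter

/-- The Cauchy-Riemann operator ∂̄ = ½(∂ₓ + i∂_y) acting on real-differentiable f : ℂ → ℂ. -/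
noncomputable def dbar (f : ℂ → ℂ) (z : ℂ) : ℂ :=
  (fderiv ℝ f z 1 + Complex.I * fderiv ℝ f z Complex.I) / 2

/-- The operator ∂ = ½(∂ₓ − i∂_y). -/
noncomputable def del (f : ℂ → ℂ) (z : ℂ) : ℂ :=
  (fderiv ℝ f z 1 - Complex.I * fderiv ℝ f z Complex.I) / 2

/-- e(z,k) = exp(i(zk + conj(z)conj(k))). -/
noncomputable def eZK (z k : ℂ) : ℂ :=
  Complex.exp (Complex.I * (z * k + (starRingEnd ℂ) z * (starRingEnd ℂ) k))

section Calculus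

variable {f g : ℂ → ℂ} {z : ℂ}

lemma del_mul (hf : DifferentiableAt ℝ f z) (hg : DifferentiableAt ℝ g z) :
    del (fun w => f w * g w) z = del f z * g z + f z * del g z := by
  have h : fderiv ℝ (f * g) z = f z • fderiv ℝ g z + g z • fderiv ℝ f z := fderiv_mul hf hg
  simp only [del, Pi.mul_def] at h ⊢
  simp only [h, add_apply, smul_apply, smul_eq_mul]
  ring

lemma del_sub (hf : DifferentiableAt ℝ f z) (hg : DifferentiableAt ℝ g z) :
    del (fun w => f w - g w) z = del f z - del g z := by
  have h : fderiv ℝ (f - g) z = fderiv ℝ f z - fderiv ℝ g z := fderiv_sub hf hg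
  simp only [del, Pi.sub_def] at h ⊢
  simp only [h, sub_apply]
  ring

lemma del_const_mul (hf : DifferentiableAt ℝ f z) (c : ℂ) :
    del (fun w => c * f w) z = c * del f z := by
  simp only [del, fderiv_const_mul hf, smul_apply, smul_eq_mul]
  ring

lemma del_conj (hf : DifferentiableAt ℝ f z) :
    del (fun w => starRingEnd ℂ (f w)) z = starRingEnd ℂ (dbar f z) := by
  have h := hf.hasFDerivAt.star.fderiv
  simp only [Complex.star_def] at h
  simp only [del, dbar, h, ContinuousLinearMap.comp_apply, ContinuousLinearEquiv.coe_coe,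
    starL'_apply, RCLike.star_def, map_div₀, map_add, map_mul, conj_I, map_ofNat]
  ring

end Calculus

section ExponentialWeight

lemma conj_eZK (z k : ℂ) : starRingEnd ℂ (eZK z k) = eZK z (-k) := by
  simp only [eZK, ← Complex.exp_conj, map_mul, map_add, Complex.conj_I, Complex.conj_conj,
    map_neg]
  ring_nf

lemma eZK_mul_eZK_neg (z k : ℂ) : eZK z k * eZK z (-k) = 1 := by
  rw [eZK, eZK, ← Complex.exp_add, ← Complex.exp_zero]
  congr 1
  simp only [map_neg]
  ring

lemma differentiable_eZK (k : ℂ) : Differentiable ℝ (fun w => eZK w k) := by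
  unfold eZK
  fun_prop

lemma del_eZK (z k : ℂ) : del (fun w => eZK w k) z = I * k * eZK z k := by
  have h : HasFDerivAt (fun w => eZK w k) _ z :=
    (((hasFDerivAt_id (𝕜 := ℝ) z).mul_const k).add
      ((hasFDerivAt_id z).star.mul_const (starRingEnd ℂ k))).const_mul I |>.cexp
  rw [del, h.fderiv, eZK]
  simp only [id_eq, RCLike.star_def, Pi.add_apply, ContinuousLinearMap.comp_id, smul_add,
    add_apply, smul_apply, ContinuousLinearMap.id_apply, smul_eq_mul, mul_one,
    ContinuousLinearEquiv.coe_coe, starL'_apply, star_one, conj_I, mul_neg]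
  linear_combination
    (I * (starRingEnd ℂ k - k) * cexp (I * (z * k + starRingEnd ℂ z * starRingEnd ℂ k)) / 2) * I_sq

end ExponentialWeight

theorem stmt15 (k : ℂ) (q ψr ψi : ℂ → ℂ)
    (hψr : Differentiable ℝ ψr) (hψi : Differentiable ℝ ψi)
    (heqr : ∀ z, dbar ψr z + q z * eZK z (-k) * (starRingEnd ℂ) (ψr z) = 0)
    (heqi : ∀ z, dbar ψi z - q z * eZK z (-k) * (starRingEnd ℂ) (ψi z) = 0)
    (m₁ m₂ : ℂ → ℂ)
    (hm₁ : ∀ z, m₁ z = (ψr z + ψi z) / 2)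
    (hm₂ : ∀ z, m₂ z = eZK z (-k) * ((starRingEnd ℂ) (ψi z) - (starRingEnd ℂ) (ψr z)) / 2) :
    ∀ z, del m₂ z + Complex.I * k * m₂ z = (starRingEnd ℂ) (q z) * m₁ z := by
  intro z
  have hm₂' : m₂ = fun w =>
      2⁻¹ * (eZK w (-k) * (starRingEnd ℂ (ψi w) - starRingEnd ℂ (ψr w))) :=
    funext fun w => by rw [hm₂]; ring
  have hdbar_r : dbar ψr z = -(q z * eZK z (-k) * starRingEnd ℂ (ψr z)) :=
    eq_neg_of_add_eq_zero_left (heqr z)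
  have hdbar_i : dbar ψi z = q z * eZK z (-k) * starRingEnd ℂ (ψi z) :=
    sub_eq_zero.mp (heqi z)
  have hconj_r : DifferentiableAt ℝ (fun w => starRingEnd ℂ (ψr w)) z := (hψr z).star
  have hconj_i : DifferentiableAt ℝ (fun w => starRingEnd ℂ (ψi w)) z := (hψi z).star
  rw [hm₂', del_const_mul ((differentiable_eZK _ z).fun_mul (hconj_i.fun_sub hconj_r)),
    del_mul (differentiable_eZK _ z) (hconj_i.fun_sub hconj_r), del_sub hconj_i hconj_r,
    del_conj (hψi z), del_conj (hψr z), del_eZK, hdbar_i, hdbar_r, hm₁]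
  simp only [map_neg, map_mul, conj_eZK, neg_neg, Complex.conj_conj]
  -- the `I * k * m₂` terms cancel and `|e(z, -k)| = 1` leaves `conj (q z) * m₁ z`
  linear_combination (starRingEnd ℂ (q z) * (ψi z + ψr z) / 2) * eZK_mul_eZK_neg z k
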